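/- arXiv:1511.07032 — 2 statements merged into one kernel-verified Lean document; each statement's English description precedes it below -/
import Mathlib

section
/- Let g and r be nonnegative integers and let i_1, ..., i_n be integers each at least 2. If the rational number e = 2 - 2g - r - Σ_{k=1}^n (i_k - 1)/i_k is negative, then |e| ≥ 1/42. -/
/-!
Write `e = s - N` with `s = ∑ 1/i_k` and `N = 2g + r + n - 2 ∈ ℤ`, so the claim is that a sum of
reciprocals of integers `≥ 2` lying below the integer `N` stays `1/42` below it. Since `s ≤ n/2`
this is automatic unless `(n, N)` is `(2, 1)`, `(3, 1)` or `(4, 2)`; for sorted entries these three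
cases are elementary, the extremal one being `1/2 + 1/3 + 1/7 = 41/42`.
-/

open Finset

lemma inv_add_inv_le_of_lt_one {a b : ℤ} (ha : 2 ≤ a) (hab : a ≤ b)
    (h : (a : ℚ)⁻¹ + (b : ℚ)⁻¹ < 1) : (a : ℚ)⁻¹ + (b : ℚ)⁻¹ ≤ 5 / 6 := by
  have hb : 3 ≤ b := by
    by_contra! hb
    obtain rfl : a = 2 := by omega
    obtain rfl : b = 2 := by omega
    norm_num at h
  have ha' : (a : ℚ)⁻¹ ≤ 2⁻¹ := inv_anti₀ (by norm_num) (by exact_mod_cast ha)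
  have hb' : (b : ℚ)⁻¹ ≤ 3⁻¹ := inv_anti₀ (by norm_num) (by exact_mod_cast hb)
  linarith

lemma inv_add_inv_add_inv_le_of_lt_one {a b c : ℤ} (ha : 2 ≤ a) (hab : a ≤ b) (hbc : b ≤ c)
    (h : (a : ℚ)⁻¹ + (b : ℚ)⁻¹ + (c : ℚ)⁻¹ < 1) :
    (a : ℚ)⁻¹ + (b : ℚ)⁻¹ + (c : ℚ)⁻¹ ≤ 41 / 42 := by
  rcases (by omega : a = 2 ∨ 3 ≤ a) with rfl | ha
  · rcases (by omega : b = 2 ∨ b = 3 ∨ 4 ≤ b) with rfl | rfl | hb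
    · have : (0 : ℚ) < (c : ℚ)⁻¹ := by positivity
      norm_num at h
      linarith
    · have hc : 7 ≤ c := by
        by_contra! hc
        interval_cases c <;> norm_num at h
      have hc' : (c : ℚ)⁻¹ ≤ 7⁻¹ := inv_anti₀ (by norm_num) (by exact_mod_cast hc)
      norm_num
      linarith
    · have hc : 5 ≤ c := by
        by_contra! hc
        obtain rfl : b = 4 := by omega
        obtain rfl : c = 4 := by omega
        norm_num at h
      have hb' : (b : ℚ)⁻¹ ≤ 4⁻¹ := inv_anti₀ (by norm_num) (by exact_mod_cast hb)
      have hc' : (c : ℚ)⁻¹ ≤ 5⁻¹ := inv_anti₀ (by norm_num) (by exact_mod_cast hc)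
      norm_num
      linarith
  · have hc : 4 ≤ c := by
      by_contra! hc
      obtain rfl : a = 3 := by omega
      obtain rfl : b = 3 := by omega
      obtain rfl : c = 3 := by omega
      norm_num at h
    have ha' : (a : ℚ)⁻¹ ≤ 3⁻¹ := inv_anti₀ (by norm_num) (by exact_mod_cast ha)
    have hb' : (b : ℚ)⁻¹ ≤ 3⁻¹ := inv_anti₀ (by norm_num) (by exact_mod_cast (ha.trans hab))
    have hc' : (c : ℚ)⁻¹ ≤ 4⁻¹ := inv_anti₀ (by norm_num) (by exact_mod_cast hc)
    linarith

lemma inv_add_inv_add_inv_add_inv_le_of_lt_two {a b c d : ℤ} (ha : 2 ≤ a) (hab : a ≤ b)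
    (hbc : b ≤ c) (hcd : c ≤ d) (h : (a : ℚ)⁻¹ + (b : ℚ)⁻¹ + (c : ℚ)⁻¹ + (d : ℚ)⁻¹ < 2) :
    (a : ℚ)⁻¹ + (b : ℚ)⁻¹ + (c : ℚ)⁻¹ + (d : ℚ)⁻¹ ≤ 11 / 6 := by
  have hd : 3 ≤ d := by
    by_contra! hd
    obtain rfl : a = 2 := by omega
    obtain rfl : b = 2 := by omega
    obtain rfl : c = 2 := by omega
    obtain rfl : d = 2 := by omega
    norm_num at h
  have ha' : (a : ℚ)⁻¹ ≤ 2⁻¹ := inv_anti₀ (by norm_num) (by exact_mod_cast ha)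
  have hb' : (b : ℚ)⁻¹ ≤ 2⁻¹ := inv_anti₀ (by norm_num) (by exact_mod_cast (ha.trans hab))
  have hc' : (c : ℚ)⁻¹ ≤ 2⁻¹ :=
    inv_anti₀ (by norm_num) (by exact_mod_cast ((ha.trans hab).trans hbc))
  have hd' : (d : ℚ)⁻¹ ≤ 3⁻¹ := inv_anti₀ (by norm_num) (by exact_mod_cast hd)
  linarith

lemma sum_inv_le_of_lt_of_monotone {n : ℕ} {i : Fin n → ℤ} (hi : ∀ k, 2 ≤ i k)
    (hmono : Monotone i) {N : ℤ} (hN : (n : ℤ) - 2 ≤ N) (hs : ∑ k, (i k : ℚ)⁻¹ < N) :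
    ∑ k, (i k : ℚ)⁻¹ ≤ N - 1 / 42 := by
  have hinv : ∀ k, (i k : ℚ)⁻¹ ≤ 2⁻¹ := fun k => inv_anti₀ (by norm_num) (by exact_mod_cast hi k)
  have hle : ∑ k, (i k : ℚ)⁻¹ ≤ n / 2 := by
    calc ∑ k, (i k : ℚ)⁻¹ ≤ ∑ _k : Fin n, (2 : ℚ)⁻¹ := sum_le_sum fun k _ => hinv k
      _ = n / 2 := by simp [div_eq_mul_inv]
  have hnonneg : 0 ≤ ∑ k, (i k : ℚ)⁻¹ := sum_nonneg fun k _ => by have := hi k; positivity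
  by_cases hbig : (n : ℚ) / 2 ≤ N - 1 / 42
  · linarith
  have hNpos : 0 < N := by exact_mod_cast hnonneg.trans_lt hs
  have hNn : 2 * N < n + 1 := by
    have : (2 * N : ℚ) < n + 1 := by linarith
    exact_mod_cast this
  obtain ⟨rfl, rfl⟩ | ⟨rfl, rfl⟩ | ⟨rfl, rfl⟩ :
      (n = 2 ∧ N = 1) ∨ (n = 3 ∧ N = 1) ∨ (n = 4 ∧ N = 2) := by omega
  · rw [Fin.sum_univ_two] at hs ⊢
    have := inv_add_inv_le_of_lt_one (hi 0) (@hmono 0 1 (by decide)) (by exact_mod_cast hs)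
    push_cast
    linarith
  · rw [Fin.sum_univ_three] at hs ⊢
    have := inv_add_inv_add_inv_le_of_lt_one (hi 0) (@hmono 0 1 (by decide))
      (@hmono 1 2 (by decide)) (by exact_mod_cast hs)
    push_cast
    linarith
  · rw [Fin.sum_univ_four] at hs ⊢
    have := inv_add_inv_add_inv_add_inv_le_of_lt_two (hi 0) (@hmono 0 1 (by decide))
      (@hmono 1 2 (by decide)) (@hmono 2 3 (by decide)) (by exact_mod_cast hs)
    push_cast
    linarith

lemma sum_inv_le_of_lt {n : ℕ} {i : Fin n → ℤ} (hi : ∀ k, 2 ≤ i k) {N : ℤ}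
    (hN : (n : ℤ) - 2 ≤ N) (hs : ∑ k, (i k : ℚ)⁻¹ < N) : ∑ k, (i k : ℚ)⁻¹ ≤ N - 1 / 42 := by
  have hsort : ∑ k, (i (Tuple.sort i k) : ℚ)⁻¹ = ∑ k, (i k : ℚ)⁻¹ :=
    Equiv.sum_comp (Tuple.sort i) fun k => (i k : ℚ)⁻¹
  rw [← hsort] at hs ⊢
  exact sum_inv_le_of_lt_of_monotone (fun k => hi _) (Tuple.monotone_sort i) hN hs

/-- If `e = 2 - 2g - r - Σ (i_k - 1)/i_k` is negative (g, r nonnegative integers,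
each `i_k ≥ 2`), then `|e| ≥ 1/42`. -/
theorem stmt_0 (g r : ℕ) (n : ℕ) (i : Fin n → ℤ) (hi : ∀ k, 2 ≤ i k)
    (e : ℚ) (he : e = 2 - 2 * (g : ℚ) - (r : ℚ) - ∑ k, ((i k : ℚ) - 1) / (i k : ℚ))
    (hneg : e < 0) : 1 / 42 ≤ |e| := by
  have hterm : ∀ k, ((i k : ℚ) - 1) / (i k : ℚ) = 1 - (i k : ℚ)⁻¹ := fun k => by
    have : (i k : ℚ) ≠ 0 := by exact_mod_cast (show i k ≠ 0 by linarith [hi k])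
    field_simp
  have he' : e = ∑ k, (i k : ℚ)⁻¹ - ((2 * g + r + n - 2 : ℤ) : ℚ) := by
    simp only [he, hterm, sum_sub_distrib, sum_const, card_univ, Fintype.card_fin, nsmul_eq_mul,
      mul_one]
    push_cast
    ring
  have hbound := sum_inv_le_of_lt hi (N := 2 * g + r + n - 2) (by omega) (by linarith)
  rw [abs_of_neg hneg]
  linarith
end

section
/- Let a, b, c be integers with 2 ≤ a ≤ b ≤ c. If 1 - 1/a - 1/b - 1/c > 0, then 1 - 1/a - 1/b - 1/c ≥ 1/42, with equality if and only if (a,b,c) = (2,3,7). -/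
/-!
If `a ≥ 4`, or `a = 3` and `b ≥ 4`, or `a = 2` and `b ≥ 5`, the reciprocals are small enough that
`1 - 1/a - 1/b - 1/c ≥ 1/10`; `(2,2,c)` gives `-1/c < 0`. In the remaining cases `(2,3,c)`, `(2,4,c)`, `(3,3,c)` the value is
`1/n - 1/c` with `n = 6, 4, 3`; it is positive only for integers `c ≥ n + 1`. For `n = 6` this
leaves `c = 7`, with value `1/42`, and `c ≥ 8`, with value at least `1/24`; every other triple
also gives at least `1/24`.
-/

lemma lt_of_one_div_sub_one_div_pos {n c : ℤ} (hc : 0 < c) (h : 0 < 1 / (n : ℚ) - 1 / c) :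
    n < c := by
  have hc' : (0 : ℚ) < c := by exact_mod_cast hc
  exact_mod_cast lt_of_one_div_lt_one_div hc' (sub_pos.mp h)

lemma eq_two_three_seven_or_one_div_twentyFour_le {a b c : ℤ} (ha : 2 ≤ a) (hab : a ≤ b)
    (hbc : b ≤ c) (hpos : 0 < 1 - 1 / (a : ℚ) - 1 / (b : ℚ) - 1 / (c : ℚ)) :
    (a, b, c) = (2, 3, 7) ∨ 1 / 24 ≤ 1 - 1 / (a : ℚ) - 1 / (b : ℚ) - 1 / (c : ℚ) := by
  have hc0 : 0 < c := by omega
  rcases (by omega : a = 2 ∨ a = 3 ∨ 4 ≤ a) with rfl | rfl | ha4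
  · rcases (by omega : b = 2 ∨ b = 3 ∨ b = 4 ∨ 5 ≤ b) with rfl | rfl | rfl | hb5
    · have : (0 : ℚ) < 1 / c := one_div_pos.mpr (by exact_mod_cast hc0)
      push_cast at hpos
      linarith
    · have hc6 : 6 < c := lt_of_one_div_sub_one_div_pos hc0 (by push_cast at hpos; linarith)
      rcases (by omega : c = 7 ∨ 8 ≤ c) with rfl | hc8
      · exact Or.inl rfl
      · have : (1 : ℚ) / c ≤ 1 / 8 := by gcongr; exact_mod_cast hc8
        right; push_cast; linarith
    · have hc4 : 4 < c := lt_of_one_div_sub_one_div_pos hc0 (by push_cast at hpos; linarith)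
      have : (1 : ℚ) / c ≤ 1 / 5 := by gcongr; exact_mod_cast hc4
      right; push_cast; linarith
    · have : (1 : ℚ) / b ≤ 1 / 5 := by gcongr; exact_mod_cast hb5
      have : (1 : ℚ) / c ≤ 1 / 5 := by gcongr; exact_mod_cast hb5.trans hbc
      right; push_cast; linarith
  · rcases (by omega : b = 3 ∨ 4 ≤ b) with rfl | hb4
    · have hc3 : 3 < c := lt_of_one_div_sub_one_div_pos hc0 (by push_cast at hpos; linarith)
      have : (1 : ℚ) / c ≤ 1 / 4 := by gcongr; exact_mod_cast hc3
      right; push_cast; linarith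
    · have : (1 : ℚ) / b ≤ 1 / 4 := by gcongr; exact_mod_cast hb4
      have : (1 : ℚ) / c ≤ 1 / 4 := by gcongr; exact_mod_cast hb4.trans hbc
      right; push_cast; linarith
  · have : (1 : ℚ) / a ≤ 1 / 4 := by gcongr; exact_mod_cast ha4
    have : (1 : ℚ) / b ≤ 1 / 4 := by gcongr; exact_mod_cast ha4.trans hab
    have : (1 : ℚ) / c ≤ 1 / 4 := by gcongr; exact_mod_cast (ha4.trans hab).trans hbc
    right; linarith

/-- Hurwitz bound for hyperbolic triangle signatures. -/
theorem stmt_1 (a b c : ℤ) (ha : 2 ≤ a) (hab : a ≤ b) (hbc : b ≤ c)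
    (hpos : 0 < 1 - 1 / (a : ℚ) - 1 / (b : ℚ) - 1 / (c : ℚ)) :
    1 / 42 ≤ 1 - 1 / (a : ℚ) - 1 / (b : ℚ) - 1 / (c : ℚ) ∧
      (1 - 1 / (a : ℚ) - 1 / (b : ℚ) - 1 / (c : ℚ) = 1 / 42 ↔ (a, b, c) = (2, 3, 7)) := by
  rcases eq_two_three_seven_or_one_div_twentyFour_le ha hab hbc hpos with h | h
  · simp only [Prod.mk_inj] at h
    obtain ⟨rfl, rfl, rfl⟩ := h
    norm_num
  · have hne : (a, b, c) ≠ (2, 3, 7) := by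
      rintro ⟨⟩
      norm_num at h
    exact ⟨by linarith, iff_of_false (by linarith) hne⟩
end
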